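/- RIP near-orthogonality of disjoint supports: Suppose A satisfies the s-RIP with constant δ_s < 1. Let I, J ⊆ [n] be disjoint with |I ∪ J| ≤ s, and let x ∈ R^n. Then ‖A_Jᵀ A_I x_I‖_2 ≤ δ_s ‖x_I‖_2. -/

import Mathlib

/-!
For `u` supported on `I` and `v` on `J`, the vectors `u ± v` are supported on `I ∪ J` and have
squared norm `‖u‖² + ‖v‖²`, so polarization `4 ⟪Au, Av⟫ = ‖A(u + v)‖² - ‖A(u - v)‖²` together with
the two RIP bounds gives `⟪Au, Av⟫ ≤ δ (‖u‖² + ‖v‖²) / 2`; rescaling `u` and `v` improves this to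
`δ ‖u‖ ‖v‖`. For `v = (Aᵀ A u)_J` one has `⟪Au, Av⟫ = ‖v‖²`, whence `‖v‖ ≤ δ ‖u‖`.
-/

open Finset Matrix

noncomputable def l1 {k : ℕ} (x : Fin k → ℝ) : ℝ := ∑ i, |x i|

noncomputable def l2 {k : ℕ} (x : Fin k → ℝ) : ℝ := Real.sqrt (∑ i, (x i)^2)

def restr {k : ℕ} (I : Finset (Fin k)) (x : Fin k → ℝ) : Fin k → ℝ :=
  fun i => if i ∈ I then x i else 0


def RIP {m n : ℕ} (A : Matrix (Fin m) (Fin n) ℝ) (s : ℕ) (δ : ℝ) : Prop :=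
  ∀ (x : Fin n → ℝ) (J : Finset (Fin n)), J.card ≤ s →
    (1 - δ) * (l2 (restr J x))^2 ≤ (l2 (A.mulVec (restr J x)))^2 ∧
    (l2 (A.mulVec (restr J x)))^2 ≤ (1 + δ) * (l2 (restr J x))^2

section l2

variable {k : ℕ}

lemma l2_eq_sqrt_dotProduct (v : Fin k → ℝ) : l2 v = √(v ⬝ᵥ v) := by
  simp only [l2, dotProduct, sq]

lemma l2_nonneg (v : Fin k → ℝ) : 0 ≤ l2 v := Real.sqrt_nonneg _

lemma dotProduct_self_eq_l2_sq (v : Fin k → ℝ) : v ⬝ᵥ v = l2 v ^ 2 := by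
  rw [l2_eq_sqrt_dotProduct]
  exact (Real.sq_sqrt (Finset.sum_nonneg fun i _ => mul_self_nonneg (v i))).symm

lemma l2_eq_zero_iff {v : Fin k → ℝ} : l2 v = 0 ↔ v = 0 := by
  rw [← pow_eq_zero_iff two_ne_zero, ← dotProduct_self_eq_l2_sq, dotProduct_self_eq_zero]

lemma l2_smul {c : ℝ} (hc : 0 ≤ c) (v : Fin k → ℝ) : l2 (c • v) = c * l2 v := by
  rw [l2_eq_sqrt_dotProduct, l2_eq_sqrt_dotProduct, smul_dotProduct, dotProduct_smul, smul_eq_mul,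
    smul_eq_mul, ← mul_assoc, Real.sqrt_mul (mul_self_nonneg c), Real.sqrt_mul_self hc]

end l2

section restr

variable {k : ℕ} {I J K : Finset (Fin k)}

lemma restr_add (x y : Fin k → ℝ) : restr K (x + y) = restr K x + restr K y := by
  ext i; by_cases hi : i ∈ K <;> simp [restr, hi]

lemma restr_sub (x y : Fin k → ℝ) : restr K (x - y) = restr K x - restr K y := by
  ext i; by_cases hi : i ∈ K <;> simp [restr, hi]

lemma restr_smul (c : ℝ) (x : Fin k → ℝ) : restr K (c • x) = c • restr K x := by
  ext i; by_cases hi : i ∈ K <;> simp [restr, hi]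

lemma restr_restr_of_subset (h : I ⊆ K) (x : Fin k → ℝ) : restr K (restr I x) = restr I x := by
  ext i
  by_cases hi : i ∈ I
  · simp [restr, hi, h hi]
  · simp [restr, hi]

lemma restr_dotProduct_restr_of_disjoint (h : Disjoint I J) (x y : Fin k → ℝ) :
    restr I x ⬝ᵥ restr J y = 0 :=
  Finset.sum_eq_zero fun i _ => by
    by_cases hi : i ∈ I
    · simp [restr, Finset.disjoint_left.mp h hi]
    · simp [restr, hi]

lemma dotProduct_restr_self (x : Fin k → ℝ) : x ⬝ᵥ restr K x = l2 (restr K x) ^ 2 := by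
  rw [← dotProduct_self_eq_l2_sq]
  exact Finset.sum_congr rfl fun i _ => by by_cases hi : i ∈ K <;> simp [restr, hi]

end restr

namespace RIP

variable {m n s : ℕ} {A : Matrix (Fin m) (Fin n) ℝ} {δ : ℝ} {I J : Finset (Fin n)}

lemma mul_l2_restr_nonneg (hRIP : RIP A s δ) (hJ : J.card ≤ s) (x : Fin n → ℝ) :
    0 ≤ δ * l2 (restr J x) := by
  obtain ⟨hlow, hupp⟩ := hRIP x J hJ
  rcases (l2_nonneg (restr J x)).eq_or_lt with h0 | hpos
  · rw [← h0, mul_zero]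
  · nlinarith

lemma dotProduct_mulVec_restr_le (hRIP : RIP A s δ) (hdisj : Disjoint I J)
    (hcard : (I ∪ J).card ≤ s) (x y : Fin n → ℝ) :
    (A *ᵥ restr I x) ⬝ᵥ (A *ᵥ restr J y) ≤
      δ / 2 * (l2 (restr I x) ^ 2 + l2 (restr J y) ^ 2) := by
  have hadd := (hRIP (restr I x + restr J y) (I ∪ J) hcard).2
  have hsub := (hRIP (restr I x - restr J y) (I ∪ J) hcard).1
  rw [restr_add, restr_restr_of_subset subset_union_left,
    restr_restr_of_subset subset_union_right] at hadd
  rw [restr_sub, restr_restr_of_subset subset_union_left,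
    restr_restr_of_subset subset_union_right] at hsub
  simp only [← dotProduct_self_eq_l2_sq, mulVec_add, mulVec_sub, add_dotProduct, dotProduct_add,
    sub_dotProduct, dotProduct_sub] at hadd hsub ⊢
  linarith [restr_dotProduct_restr_of_disjoint hdisj x y, dotProduct_comm (restr J y) (restr I x),
    dotProduct_comm (A *ᵥ restr J y) (A *ᵥ restr I x)]

lemma dotProduct_mulVec_restr_le_mul (hRIP : RIP A s δ) (hdisj : Disjoint I J)
    (hcard : (I ∪ J).card ≤ s) (x y : Fin n → ℝ) :
    (A *ᵥ restr I x) ⬝ᵥ (A *ᵥ restr J y) ≤ δ * l2 (restr I x) * l2 (restr J y) := by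
  rcases (l2_nonneg (restr I x)).eq_or_lt with ha0 | ha0
  · rw [← ha0, l2_eq_zero_iff.mp ha0.symm]; simp
  rcases (l2_nonneg (restr J y)).eq_or_lt with hb0 | hb0
  · rw [← hb0, l2_eq_zero_iff.mp hb0.symm]; simp
  have h := hRIP.dotProduct_mulVec_restr_le hdisj hcard (l2 (restr J y) • x) (l2 (restr I x) • y)
  rw [restr_smul, restr_smul, mulVec_smul, mulVec_smul, smul_dotProduct, dotProduct_smul,
    l2_smul hb0.le, l2_smul ha0.le, smul_eq_mul, smul_eq_mul] at h
  nlinarith [mul_pos ha0 hb0]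

end RIP

theorem stmt10_general {m n : ℕ} (A : Matrix (Fin m) (Fin n) ℝ) (s : ℕ) (δ : ℝ)
    (hRIP : RIP A s δ) (x : Fin n → ℝ) (I J : Finset (Fin n))
    (hdisj : Disjoint I J) (hcard : (I ∪ J).card ≤ s) :
    l2 (restr J (Aᵀ.mulVec (A.mulVec (restr I x)))) ≤ δ * l2 (restr I x) := by
  set u := restr I x
  set y := Aᵀ *ᵥ (A *ᵥ u) with hy_def
  have hy : l2 (restr J y) ^ 2 ≤ δ * l2 u * l2 (restr J y) :=
    calc l2 (restr J y) ^ 2 = (A *ᵥ u) ⬝ᵥ (A *ᵥ restr J y) := by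
          rw [← dotProduct_restr_self, hy_def, mulVec_transpose, dotProduct_mulVec]
      _ ≤ δ * l2 u * l2 (restr J y) := hRIP.dotProduct_mulVec_restr_le_mul hdisj hcard x y
  rcases (l2_nonneg (restr J y)).eq_or_lt with h0 | hpos
  · rw [← h0]
    exact hRIP.mul_l2_restr_nonneg ((card_le_card subset_union_left).trans hcard) x
  · nlinarith

theorem stmt10 {m n : ℕ} (A : Matrix (Fin m) (Fin n) ℝ) (s : ℕ) (δ : ℝ)
    (hδ : δ < 1) (hRIP : RIP A s δ) (x : Fin n → ℝ) (I J : Finset (Fin n))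
    (hdisj : Disjoint I J) (hcard : (I ∪ J).card ≤ s) :
    l2 (restr J (Aᵀ.mulVec (A.mulVec (restr I x)))) ≤ δ * l2 (restr I x) :=
  stmt10_general A s δ hRIP x I J hdisj hcard
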